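/- Let n ≥ 1, ρ ∈ (0,1), and let A, B ⊆ {0,1}^n be nonempty. Then P_ρ(A×B) ≥ |A|·|B|·2^{−2n}·(1−ρ)^n·((1+ρ)/(1−ρ))^{n·s}, where s = h⁻¹(log|A|/n) * h⁻¹(log|B|/n). -/

import Mathlib

open Finset Asymptotics Filter

/-- Binary entropy function (base-2 logarithms). -/
noncomputable def binEnt (p : ℝ) : ℝ :=
  -(p * Real.logb 2 p) - (1 - p) * Real.logb 2 (1 - p)

/-- Inverse of the binary entropy function restricted to `[0, 1/2]`. -/
noncomputable def binEntInv (x : ℝ) : ℝ :=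
  sSup {p : ℝ | p ∈ Set.Icc (0:ℝ) (1/2) ∧ binEnt p ≤ x}

/-- `p*q = p(1-q) + q(1-p)`. -/
def pstar (p q : ℝ) : ℝ := p * (1 - q) + q * (1 - p)

/-- Probability of the rectangle `A × B` for `ρ`-correlated uniform binary strings. -/
noncomputable def Pxy (n : ℕ) (ρ : ℝ) (A B : Finset (Fin n → Bool)) : ℝ :=
  ∑ a ∈ A, ∑ b ∈ B,
    (2:ℝ)⁻¹ ^ n * ((1 + ρ)/2) ^ n * ((1 - ρ)/(1 + ρ)) ^ (hammingDist a b)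

/-- Hamming sphere of radius `j` around the all-zeros string in `{0,1}^n`. -/
def hSphere (n j : ℕ) : Finset (Fin n → Bool) :=
  Finset.univ.filter (fun x => (Finset.univ.filter (fun i => x i = true)).card = j)

/-- The exponent function `w_d(α,β)`. -/
noncomputable def wd (α β d : ℝ) : ℝ :=
  α + binEntInv α * binEnt (1/2 + (binEntInv β - d)/(2 * binEntInv α))
    + (1 - binEntInv α) * binEnt (1/2 + (d - (1 - binEntInv β))/(2 * (1 - binEntInv α)))

/-- The noise operator `T_ρ`. -/
noncomputable def Tnoise (n : ℕ) (ρ : ℝ) (f : (Fin n → Bool) → ℝ) (y : Fin n → Bool) : ℝ :=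
  ∑ x : Fin n → Bool,
    f x * ((1 + ρ)/2) ^ (n - hammingDist x y) * ((1 - ρ)/2) ^ (hammingDist x y)

/-- The normalized `p`-norm on functions on the hypercube. -/
noncomputable def pNorm (n : ℕ) (p : ℝ) (f : (Fin n → Bool) → ℝ) : ℝ :=
  ((2:ℝ)⁻¹ ^ n * ∑ x : Fin n → Bool, |f x| ^ p) ^ (1/p)

/-- Indicator function of a set `A ⊆ {0,1}^n`. -/
def indA (n : ℕ) (A : Finset (Fin n → Bool)) : (Fin n → Bool) → ℝ :=
  fun x => if x ∈ A then 1 else 0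

/-!
With `c = (1 - ρ)/(1 + ρ) ≤ 1` one has `P_ρ(A×B) = 2^{-n} ((1+ρ)/2)^n ∑_{a,b} c^{d(a,b)}`, and by
convexity of `x ↦ c^x` the sum is at least `|A| |B| c^D`, where `D` is the mean distance over
`A × B`. Writing `f_i`, `g_i` for the frequency of the bit `i` in `A` and `B`, one has
`D = ∑_i f_i * g_i` and `f_i * g_i = 1/2 - 2 (f_i - 1/2) (g_i - 1/2)`, so by Cauchy–Schwarz
`D ≤ n (1 - α * β)` once `∑_i (f_i - 1/2)^2 ≤ n (1/2 - α)^2` for `α = h⁻¹(log|A|/n)` (and the same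
for `B`). This follows from `log |A| ≤ ∑_i H(f_i)` (Gibbs' inequality between the uniform
distribution on `A` and the product of its one-bit marginals) and Jensen's inequality for
`t ↦ H(1/2 - √t)`, which is concave on `[0, 1/4]`.
-/

open Real

noncomputable def logRatio (y : ℝ) : ℝ := log (1 + y) - log (1 - y)

lemma hasDerivAt_logRatio {y : ℝ} (hy : y ∈ Set.Ioo (-1) 1) :
    HasDerivAt logRatio (2 / (1 - y ^ 2)) y := by
  have h1 : 1 + y ≠ 0 := by linarith [hy.1]
  have h2 : 1 - y ≠ 0 := by linarith [hy.2]
  have h3 : 1 - y ^ 2 ≠ 0 := by nlinarith [hy.1, hy.2]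
  refine ((((hasDerivAt_id' y).const_add 1).log h1).sub
    (((hasDerivAt_id' y).const_sub 1).log h2)).congr_deriv ?_
  field_simp
  ring

lemma convexOn_logRatio : ConvexOn ℝ (Set.Ico 0 1) logRatio := by
  have hmem : ∀ {y : ℝ}, y ∈ Set.Ico 0 1 → y ∈ Set.Ioo (-1) 1 := fun hy =>
    ⟨by linarith [hy.1], hy.2⟩
  apply MonotoneOn.convexOn_of_deriv (convex_Ico 0 1)
  · exact fun y hy => (hasDerivAt_logRatio (hmem hy)).continuousAt.continuousWithinAt
  · rw [interior_Ico]
    exact fun y hy => (hasDerivAt_logRatio (hmem (Set.Ioo_subset_Ico_self hy))).differentiableAt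
      |>.differentiableWithinAt
  · rw [interior_Ico]
    intro x hx y hy hxy
    rw [(hasDerivAt_logRatio (hmem (Set.Ioo_subset_Ico_self hx))).deriv,
      (hasDerivAt_logRatio (hmem (Set.Ioo_subset_Ico_self hy))).deriv]
    have : x ^ 2 ≤ y ^ 2 := pow_le_pow_left₀ hx.1.le hxy 2
    gcongr
    nlinarith [hy.2, hy.1]

lemma monotoneOn_logRatio_div : MonotoneOn (fun y => logRatio y / y) (Set.Ioo 0 1) := by
  intro x hx y hy hxy
  have := convexOn_logRatio.secant_mono (a := 0) ⟨le_rfl, zero_lt_one⟩ ⟨hx.1.le, hx.2⟩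
    ⟨hy.1.le, hy.2⟩ hx.1.ne' hy.1.ne' hxy
  simpa [logRatio] using this

lemma two_mul_sqrt_mem_Ioo {t : ℝ} (ht : t ∈ Set.Ioo 0 (1 / 4)) : 2 * √t ∈ Set.Ioo 0 1 := by
  have : √t < 1 / 2 := (sqrt_lt' one_half_pos).2 (by linarith [ht.2])
  exact ⟨mul_pos two_pos (sqrt_pos.mpr ht.1), by linarith⟩

lemma hasDerivAt_binEntropy_half_sub_sqrt {t : ℝ} (ht : t ∈ Set.Ioo 0 (1 / 4)) :
    HasDerivAt (fun t => binEntropy (1 / 2 - √t)) (-(logRatio (2 * √t) / (2 * √t))) t := by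
  obtain ⟨hr0, hr1⟩ := two_mul_sqrt_mem_Ioo ht
  have := (hasDerivAt_binEntropy (p := 1 / 2 - √t) (by linarith) (by linarith)).comp t
    ((hasDerivAt_sqrt ht.1.ne').const_sub (1 / 2))
  refine this.congr_deriv ?_
  have e1 : log (1 - (1 / 2 - √t)) = log (1 + 2 * √t) - log 2 := by
    rw [← log_div (by linarith) two_ne_zero]; ring_nf
  have e2 : log (1 / 2 - √t) = log (1 - 2 * √t) - log 2 := by
    rw [← log_div (by linarith) two_ne_zero]; ring_nf
  rw [logRatio, e1, e2]
  field_simp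
  ring

lemma concaveOn_binEntropy_half_sub_sqrt :
    ConcaveOn ℝ (Set.Icc 0 (1 / 4)) (fun t => binEntropy (1 / 2 - √t)) := by
  apply AntitoneOn.concaveOn_of_deriv (convex_Icc 0 (1 / 4))
  · exact (binEntropy_continuous.comp (continuous_const.sub continuous_sqrt)).continuousOn
  · rw [interior_Icc]
    exact fun t ht =>
      (hasDerivAt_binEntropy_half_sub_sqrt ht).differentiableAt.differentiableWithinAt
  · rw [interior_Icc]
    intro s hs t ht hst
    rw [(hasDerivAt_binEntropy_half_sub_sqrt hs).deriv,
      (hasDerivAt_binEntropy_half_sub_sqrt ht).deriv, neg_le_neg_iff]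
    exact monotoneOn_logRatio_div (two_mul_sqrt_mem_Ioo hs) (two_mul_sqrt_mem_Ioo ht) (by gcongr)

lemma binEnt_eq_binEntropy_div (p : ℝ) : binEnt p = binEntropy p / log 2 := by
  rw [binEnt, binEntropy, log_inv, log_inv, logb, logb]
  ring

lemma binEnt_strictMonoOn : StrictMonoOn binEnt (Set.Icc 0 (1 / 2)) := by
  intro p hp q hq hpq
  rw [one_div] at hp hq
  simp only [binEnt_eq_binEntropy_div]
  exact div_lt_div_of_pos_right (binEntropy_strictMonoOn hp hq hpq) (log_pos one_lt_two)

lemma binEntInv_le_half (x : ℝ) : binEntInv x ≤ 1 / 2 :=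
  Real.sSup_le (fun _ hp => hp.1.2) one_half_pos.le

lemma binEntInv_le_of_le_binEnt {x q : ℝ} (hq : q ∈ Set.Icc 0 (1 / 2)) (hxq : x ≤ binEnt q) :
    binEntInv x ≤ q :=
  Real.sSup_le (fun _ ⟨hp, hpx⟩ => (binEnt_strictMonoOn.le_iff_le hp hq).1 (hpx.trans hxq)) hq.1

lemma binEntropy_half_sub_sqrt_sq (p : ℝ) :
    binEntropy (1 / 2 - √((p - 1 / 2) ^ 2)) = binEntropy p := by
  rw [sqrt_sq_eq_abs]
  rcases abs_cases (p - 1 / 2) with ⟨h, _⟩ | ⟨h, _⟩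
  · rw [h, ← binEntropy_one_sub]
    ring_nf
  · rw [h]
    ring_nf

lemma sum_binEntropy_div_card_le {ι : Type*} {s : Finset ι} (hs : s.Nonempty) {p : ι → ℝ}
    (hp : ∀ i ∈ s, p i ∈ Set.Icc 0 1) :
    (∑ i ∈ s, binEntropy (p i)) / #s ≤
      binEntropy (1 / 2 - √((∑ i ∈ s, (p i - 1 / 2) ^ 2) / #s)) := by
  have hw : ∑ _i ∈ s, (#s : ℝ)⁻¹ = 1 := by
    rw [sum_const, nsmul_eq_mul, mul_inv_cancel₀ (by simp [hs.ne_empty])]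
  have := concaveOn_binEntropy_half_sub_sqrt.le_map_sum (t := s) (w := fun _ => (#s : ℝ)⁻¹)
    (p := fun i => (p i - 1 / 2) ^ 2) (fun _ _ => by positivity) hw
    (fun i hi => ⟨sq_nonneg _, by obtain ⟨h0, h1⟩ := hp i hi; nlinarith⟩)
  simp only [smul_eq_mul, ← mul_sum, binEntropy_half_sub_sqrt_sq] at this
  simpa only [div_eq_inv_mul] using this

lemma sum_sq_sub_half_le {ι : Type*} {s : Finset ι} {p : ι → ℝ} (hp : ∀ i ∈ s, p i ∈ Set.Icc 0 1)
    {x : ℝ} (hx : x ≤ (∑ i ∈ s, binEnt (p i)) / #s) :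
    ∑ i ∈ s, (p i - 1 / 2) ^ 2 ≤ #s * (1 / 2 - binEntInv x) ^ 2 := by
  rcases s.eq_empty_or_nonempty with rfl | hs
  · simp
  have hcard : (0 : ℝ) < #s := by exact_mod_cast hs.card_pos
  set m : ℝ := (∑ i ∈ s, (p i - 1 / 2) ^ 2) / #s
  have hm0 : 0 ≤ m := div_nonneg (sum_nonneg fun _ _ => sq_nonneg _) hcard.le
  have hm : m ≤ (1 / 2) ^ 2 := by
    rw [div_le_iff₀ hcard]
    calc ∑ i ∈ s, (p i - 1 / 2) ^ 2 ≤ ∑ _i ∈ s, (1 / 2 : ℝ) ^ 2 :=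
          sum_le_sum fun i hi => by obtain ⟨h0, h1⟩ := hp i hi; nlinarith
      _ = (1 / 2) ^ 2 * #s := by rw [sum_const, nsmul_eq_mul, mul_comm]
  have hsqrt : √m ≤ 1 / 2 := sqrt_le_iff.2 ⟨one_half_pos.le, hm⟩
  have hx' : x ≤ binEnt (1 / 2 - √m) := by
    rw [binEnt_eq_binEntropy_div]
    calc x ≤ (∑ i ∈ s, binEnt (p i)) / #s := hx
      _ = (∑ i ∈ s, binEntropy (p i)) / #s / log 2 := by
        simp only [binEnt_eq_binEntropy_div, ← sum_div, div_right_comm]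
      _ ≤ binEntropy (1 / 2 - √m) / log 2 := by
        gcongr
        exact sum_binEntropy_div_card_le hs hp
  have hα : binEntInv x ≤ 1 / 2 - √m :=
    binEntInv_le_of_le_binEnt ⟨by linarith, by linarith [sqrt_nonneg m]⟩ hx'
  have : m ≤ (1 / 2 - binEntInv x) ^ 2 :=
    calc m = √m ^ 2 := (sq_sqrt hm0).symm
      _ ≤ (1 / 2 - binEntInv x) ^ 2 := pow_le_pow_left₀ (sqrt_nonneg _) (by linarith) 2
  rwa [div_le_iff₀' hcard] at this

lemma pstar_indicator (a b : Bool) :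
    pstar (if a then 1 else 0) (if b then 1 else 0) = if a ≠ b then 1 else 0 := by
  cases a <;> cases b <;> norm_num [pstar]

lemma sum_sum_pstar {α β : Type*} (s : Finset α) (t : Finset β) (x : α → ℝ) (y : β → ℝ) :
    ∑ a ∈ s, ∑ b ∈ t, pstar (x a) (y b) =
      #t * ∑ a ∈ s, x a + #s * ∑ b ∈ t, y b - 2 * (∑ a ∈ s, x a) * ∑ b ∈ t, y b := by
  have hpstar : ∀ a b, pstar (x a) (y b) = x a + y b - 2 * (x a * y b) := fun _ _ => by
    unfold pstar; ring
  simp only [hpstar, sum_add_distrib, sum_sub_distrib, sum_const, nsmul_eq_mul, ← mul_sum]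
  rw [← sum_mul]
  ring

lemma sum_pstar_le {ι : Type*} (s : Finset ι) (p q : ι → ℝ) {α β : ℝ} (hα : α ≤ 1 / 2)
    (hβ : β ≤ 1 / 2) (hp : ∑ i ∈ s, (p i - 1 / 2) ^ 2 ≤ #s * (1 / 2 - α) ^ 2)
    (hq : ∑ i ∈ s, (q i - 1 / 2) ^ 2 ≤ #s * (1 / 2 - β) ^ 2) :
    ∑ i ∈ s, pstar (p i) (q i) ≤ #s * (1 - pstar α β) := by
  have cauchySchwarz : (∑ i ∈ s, (p i - 1 / 2) * (q i - 1 / 2)) ^ 2 ≤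
      (#s * ((1 / 2 - α) * (1 / 2 - β))) ^ 2 :=
    calc _ ≤ (∑ i ∈ s, (p i - 1 / 2) ^ 2) * ∑ i ∈ s, (q i - 1 / 2) ^ 2 :=
          sum_mul_sq_le_sq_mul_sq _ _ _
      _ ≤ (#s * (1 / 2 - α) ^ 2) * (#s * (1 / 2 - β) ^ 2) :=
          mul_le_mul hp hq (sum_nonneg fun _ _ => sq_nonneg _) (by positivity)
      _ = _ := by ring
  have hlow := (abs_le_of_sq_le_sq' cauchySchwarz
    (mul_nonneg (Nat.cast_nonneg _) (mul_nonneg (by linarith) (by linarith)))).1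
  have hpstar : ∀ i, pstar (p i) (q i) = 1 / 2 - 2 * ((p i - 1 / 2) * (q i - 1 / 2)) := fun i => by
    unfold pstar; ring
  simp only [hpstar, sum_sub_distrib, sum_const, nsmul_eq_mul, ← mul_sum]
  rw [pstar]
  nlinarith

lemma card_mul_rpow_le_sum_rpow {ι : Type*} (s : Finset ι) {c : ℝ} (hc : 0 < c) (f : ι → ℝ)
    {m : ℝ} (hm : ∑ i ∈ s, f i = #s * m) : #s * c ^ m ≤ ∑ i ∈ s, c ^ f i := by
  rcases s.eq_empty_or_nonempty with rfl | hs
  · simp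
  have hcard : (0 : ℝ) < #s := by exact_mod_cast hs.card_pos
  have := (convexOn_rpow_left hc).map_sum_le (t := s) (w := fun _ => (#s : ℝ)⁻¹) (p := f)
    (fun _ _ => by positivity) (by rw [sum_const, nsmul_eq_mul, mul_inv_cancel₀ hcard.ne'])
    (fun _ _ => Set.mem_univ _)
  simp only [smul_eq_mul, ← mul_sum, hm, inv_mul_cancel_left₀ hcard.ne'] at this
  rwa [le_inv_mul_iff₀ hcard] at this

lemma half_pow_mul_pow_mul_rpow {ρ : ℝ} (hρ : ρ ∈ Set.Ioo (-1 : ℝ) 1) (n : ℕ) (s : ℝ) :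
    (2 : ℝ)⁻¹ ^ n * ((1 + ρ) / 2) ^ n * ((1 - ρ) / (1 + ρ)) ^ ((n : ℝ) * (1 - s)) =
      (2 : ℝ)⁻¹ ^ (2 * n) * (1 - ρ) ^ n * ((1 + ρ) / (1 - ρ)) ^ ((n : ℝ) * s) := by
  obtain ⟨hρ0, hρ1⟩ := hρ
  have hc : 0 < (1 - ρ) / (1 + ρ) := div_pos (by linarith) (by linarith)
  rw [← inv_div (1 - ρ), inv_rpow hc.le, mul_one_sub, rpow_sub hc, rpow_natCast, pow_mul,
    ← div_eq_mul_inv, mul_div_assoc']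
  congr 1
  rw [← mul_pow, ← mul_pow, ← mul_pow]
  congr 1
  field_simp [show 1 + ρ ≠ 0 by linarith]

section Cube

variable {n : ℕ}

noncomputable def bitFreq (A : Finset (Fin n → Bool)) (i : Fin n) : ℝ :=
  #{a ∈ A | a i = true} / #A

lemma bitFreq_mem_Icc (A : Finset (Fin n → Bool)) (i : Fin n) : bitFreq A i ∈ Set.Icc 0 1 :=
  ⟨by unfold bitFreq; positivity,
    div_le_one_of_le₀ (by exact_mod_cast card_filter_le _ _) (Nat.cast_nonneg _)⟩

lemma card_mul_bitFreq (A : Finset (Fin n → Bool)) (i : Fin n) :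
    #A * bitFreq A i = #{a ∈ A | a i = true} := by
  rcases A.eq_empty_or_nonempty with rfl | hA
  · simp
  · rw [bitFreq, mul_div_cancel₀ _ (by exact_mod_cast hA.card_pos.ne')]

noncomputable def bitProb (A : Finset (Fin n → Bool)) (i : Fin n) (b : Bool) : ℝ :=
  if b then bitFreq A i else 1 - bitFreq A i

lemma sum_prod_bitProb (A : Finset (Fin n → Bool)) :
    ∑ x : Fin n → Bool, ∏ i, bitProb A i (x i) = 1 := by
  rw [← Fintype.prod_sum]
  simp [bitProb]

lemma bitProb_nonneg (A : Finset (Fin n → Bool)) (i : Fin n) (b : Bool) : 0 ≤ bitProb A i b := by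
  obtain ⟨h0, h1⟩ := bitFreq_mem_Icc A i
  unfold bitProb
  split <;> linarith

lemma bitProb_pos {A : Finset (Fin n → Bool)} {a : Fin n → Bool} (ha : a ∈ A) (i : Fin n) :
    0 < bitProb A i (a i) := by
  have hA : (0 : ℝ) < #A := by exact_mod_cast card_pos.2 ⟨a, ha⟩
  rw [bitProb, bitFreq]
  cases h : a i
  · rw [if_neg Bool.false_ne_true, sub_pos, div_lt_one hA]
    exact_mod_cast card_lt_card (filter_ssubset.2 ⟨a, ha, by simp [h]⟩)
  · rw [if_pos rfl]
    exact div_pos (by exact_mod_cast card_pos.2 ⟨a, mem_filter.2 ⟨ha, h⟩⟩) hA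

lemma sum_log_bitProb (A : Finset (Fin n → Bool)) (i : Fin n) :
    ∑ a ∈ A, log (bitProb A i (a i)) = -(#A * binEntropy (bitFreq A i)) := by
  have hsplit : ∑ a ∈ A, log (bitProb A i (a i)) =
      #{a ∈ A | a i = true} * log (bitFreq A i)
        + #{a ∈ A | ¬a i = true} * log (1 - bitFreq A i) := by
    rw [← sum_filter_add_sum_filter_not A (fun a => a i = true)]
    congr 1 <;> rw [← nsmul_eq_mul, ← sum_const] <;> refine sum_congr rfl fun a ha => ?_ <;>
      simp_all [bitProb]
  have hcompl : (#{a ∈ A | ¬a i = true} : ℝ) = #A * (1 - bitFreq A i) := by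
    rw [mul_one_sub, card_mul_bitFreq, eq_sub_iff_add_eq, add_comm]
    exact_mod_cast card_filter_add_card_filter_not _
  rw [hsplit, hcompl, ← card_mul_bitFreq, binEntropy_eq_negMulLog_add_negMulLog_one_sub,
    negMulLog, negMulLog]
  ring

lemma log_card_le_sum_binEntropy (A : Finset (Fin n → Bool)) :
    log #A ≤ ∑ i, binEntropy (bitFreq A i) := by
  rcases A.eq_empty_or_nonempty with rfl | hA
  · simpa using sum_nonneg fun i _ =>
      binEntropy_nonneg (bitFreq_mem_Icc ∅ i).1 (bitFreq_mem_Icc ∅ i).2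
  have hcard : (0 : ℝ) < #A := by exact_mod_cast hA.card_pos
  set Q := fun a : Fin n → Bool => ∏ i, bitProb A i (a i)
  have hQ : ∀ a ∈ A, 0 < Q a := fun a ha => prod_pos fun i _ => bitProb_pos ha i
  have gibbs : ∑ a ∈ A, log (#A * Q a) ≤ 0 :=
    calc ∑ a ∈ A, log (#A * Q a) ≤ ∑ a ∈ A, (#A * Q a - 1) :=
          sum_le_sum fun a ha => log_le_sub_one_of_pos (mul_pos hcard (hQ a ha))
      _ = #A * (∑ a ∈ A, Q a - 1) := by
          rw [sum_sub_distrib, ← mul_sum, sum_const, nsmul_eq_mul]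
          ring
      _ ≤ 0 := mul_nonpos_of_nonneg_of_nonpos hcard.le <| sub_nonpos.2 <|
          (sum_le_univ_sum_of_nonneg fun x => prod_nonneg fun i _ => bitProb_nonneg A i (x i)).trans
            (sum_prod_bitProb A).le
  have hsum : ∑ a ∈ A, log (#A * Q a) = #A * (log #A - ∑ i, binEntropy (bitFreq A i)) := by
    rw [sum_congr rfl fun a ha => log_mul hcard.ne' (hQ a ha).ne', sum_add_distrib, sum_const,
      nsmul_eq_mul, sum_congr rfl fun a ha => log_prod fun i _ => (bitProb_pos ha i).ne', sum_comm]
    simp only [sum_log_bitProb, sum_neg_distrib, ← mul_sum]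
    ring
  nlinarith

lemma sum_sq_bitFreq_sub_half_le (A : Finset (Fin n → Bool)) :
    ∑ i, (bitFreq A i - 1 / 2) ^ 2 ≤ n * (1 / 2 - binEntInv (logb 2 #A / n)) ^ 2 := by
  have := sum_sq_sub_half_le (s := univ) (fun i _ => bitFreq_mem_Icc A i) (x := logb 2 #A / n) ?_
  · simpa using this
  rw [card_univ, Fintype.card_fin]
  gcongr
  simp only [binEnt_eq_binEntropy_div, ← sum_div, logb]
  gcongr
  exact log_card_le_sum_binEntropy A

lemma sum_sum_hammingDist (A B : Finset (Fin n → Bool)) :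
    ∑ a ∈ A, ∑ b ∈ B, (hammingDist a b : ℝ) = #A * #B * ∑ i, pstar (bitFreq A i) (bitFreq B i) := by
  have hcount : ∀ (C : Finset (Fin n → Bool)) (i : Fin n),
      ∑ c ∈ C, (if c i then (1 : ℝ) else 0) = #C * bitFreq C i := by
    intro C i
    rw [card_mul_bitFreq, sum_boole]
  calc ∑ a ∈ A, ∑ b ∈ B, (hammingDist a b : ℝ)
      = ∑ i, ∑ a ∈ A, ∑ b ∈ B, pstar (if a i then 1 else 0) (if b i then 1 else 0) := by
        simp only [hammingDist, natCast_card_filter, ← pstar_indicator]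
        exact (sum_congr rfl fun a _ => sum_comm).trans sum_comm
    _ = ∑ i, (#A : ℝ) * #B * pstar (bitFreq A i) (bitFreq B i) := by
        refine sum_congr rfl fun i _ => ?_
        rw [sum_sum_pstar, hcount, hcount, pstar]
        ring
    _ = #A * #B * ∑ i, pstar (bitFreq A i) (bitFreq B i) := (mul_sum _ _ _).symm

lemma sum_pstar_bitFreq_le (A B : Finset (Fin n → Bool)) :
    ∑ i, pstar (bitFreq A i) (bitFreq B i) ≤
      n * (1 - pstar (binEntInv (logb 2 #A / n)) (binEntInv (logb 2 #B / n))) := by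
  simpa using sum_pstar_le univ (bitFreq A) (bitFreq B) (binEntInv_le_half _)
    (binEntInv_le_half _) (by simpa using sum_sq_bitFreq_sub_half_le A)
    (by simpa using sum_sq_bitFreq_sub_half_le B)

lemma card_mul_card_mul_rpow_le_sum_sum_pow_hammingDist (A B : Finset (Fin n → Bool)) {c t : ℝ}
    (hc0 : 0 < c) (hc1 : c ≤ 1) (ht : ∑ i, pstar (bitFreq A i) (bitFreq B i) ≤ t) :
    #A * #B * c ^ t ≤ ∑ a ∈ A, ∑ b ∈ B, c ^ hammingDist a b :=
  calc (#A * #B : ℝ) * c ^ t ≤ #A * #B * c ^ ∑ i, pstar (bitFreq A i) (bitFreq B i) :=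
        mul_le_mul_of_nonneg_left (rpow_le_rpow_of_exponent_ge hc0 hc1 ht) (by positivity)
    _ ≤ ∑ p ∈ A ×ˢ B, c ^ (hammingDist p.1 p.2 : ℝ) := by
        have := card_mul_rpow_le_sum_rpow (A ×ˢ B) hc0 (fun p => (hammingDist p.1 p.2 : ℝ))
          (m := ∑ i, pstar (bitFreq A i) (bitFreq B i))
          (by rw [sum_product, card_product, sum_sum_hammingDist]; push_cast; ring)
        simpa [card_product] using this
    _ = ∑ a ∈ A, ∑ b ∈ B, c ^ hammingDist a b := by simp [sum_product, rpow_natCast]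

end Cube

theorem stmt_18_general (n : ℕ) (ρ : ℝ) (hρ : ρ ∈ Set.Ioo (0:ℝ) 1)
    (A B : Finset (Fin n → Bool)) :
    Pxy n ρ A B ≥ (A.card : ℝ) * B.card * (2:ℝ)⁻¹ ^ (2*n) * (1 - ρ) ^ n *
      ((1 + ρ)/(1 - ρ)) ^
        ((n:ℝ) * pstar (binEntInv (Real.logb 2 A.card / n))
                       (binEntInv (Real.logb 2 B.card / n))) := by
  obtain ⟨hρ0, hρ1⟩ := hρ
  have hpairs := card_mul_card_mul_rpow_le_sum_sum_pow_hammingDist A B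
    (div_pos (by linarith : 0 < 1 - ρ) (by linarith : 0 < 1 + ρ))
    ((div_le_one (by linarith)).2 (by linarith)) (sum_pstar_bitFreq_le A B)
  rw [ge_iff_le, Pxy]
  simp only [← mul_sum]
  linear_combination -(#A * #B : ℝ) * half_pow_mul_pow_mul_rpow ⟨by linarith, hρ1⟩ n _
    + 2⁻¹ ^ n * ((1 + ρ) / 2) ^ n * hpairs

/-- lower bound on `P_ρ(A×B)` in terms of set sizes. -/
theorem stmt_18 (n : ℕ) (hn : 1 ≤ n) (ρ : ℝ) (hρ : ρ ∈ Set.Ioo (0:ℝ) 1)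
    (A B : Finset (Fin n → Bool)) (hA : A.Nonempty) (hB : B.Nonempty) :
    Pxy n ρ A B ≥ (A.card : ℝ) * B.card * (2:ℝ)⁻¹ ^ (2*n) * (1 - ρ) ^ n *
      ((1 + ρ)/(1 - ρ)) ^
        ((n:ℝ) * pstar (binEntInv (Real.logb 2 A.card / n))
                       (binEntInv (Real.logb 2 B.card / n))) :=
  stmt_18_general n ρ hρ A B
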